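/- Let (R,m,k) be a commutative Noetherian local ring and let N be a finitely generated R-module. The following are equivalent: (1) there exists a finitely generated R-module X such that N is isomorphic to a Burch submodule of X; (2) there exists an R-module homomorphism f : m → N such that the induced map f ⊗_R k : m ⊗_R k → N ⊗_R k is nonzero; (3) the trace τ_m(N) of m in N, i.e., the sum of the images of all R-homomorphisms m → N, is not contained in mN. -/

import Mathlib

open CategoryTheory

universe u

/-- The colon submodule `(N :_X I) = {x ∈ X : I • x ⊆ N}`. -/
def Submodule.colonBy {R X : Type u} [CommRing R] [AddCommGroup X] [Module R X]
    (N : Submodule R X) (I : Ideal R) : Submodule R X where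
  carrier := {x | ∀ r ∈ I, r • x ∈ N}
  add_mem' := by
    intro a b ha hb r hr
    rw [smul_add]
    exact N.add_mem (ha r hr) (hb r hr)
  zero_mem' := by
    intro r hr
    rw [smul_zero]
    exact N.zero_mem
  smul_mem' := by
    intro c x hx r hr
    rw [smul_comm]
    exact N.smul_mem c (hx r hr)

/-- A submodule `N` of a module `X` over a local ring `(R, 𝔪)` is *Burch* if
`𝔪 • (N :_X 𝔪) ≠ 𝔪 • N`. -/
def Submodule.IsBurch {R X : Type u} [CommRing R] [IsLocalRing R] [AddCommGroup X]
    [Module R X] (N : Submodule R X) : Prop :=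
  IsLocalRing.maximalIdeal R • N.colonBy (IsLocalRing.maximalIdeal R) ≠
    IsLocalRing.maximalIdeal R • N

/-- `Tor_n^R(M, N) = 0`. -/
def TorIsZero (R : Type u) [CommRing R] (M N : Type u) [AddCommGroup M] [Module R M]
    [AddCommGroup N] [Module R N] (n : ℕ) : Prop :=
  Subsingleton (((Tor (ModuleCat.{u} R) n).obj (ModuleCat.of R M)).obj (ModuleCat.of R N))

/-- `Ext^n_R(M, N) = 0`. -/
def ExtIsZero (R : Type u) [CommRing R] (M N : Type u) [AddCommGroup M] [Module R M]
    [AddCommGroup N] [Module R N] (n : ℕ) : Prop :=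
  Subsingleton
    (((Ext R (ModuleCat.{u} R) n).obj (Opposite.op (ModuleCat.of R M))).obj (ModuleCat.of R N))

/-- `M` has projective dimension strictly less than `t`, i.e. `M` admits a projective
resolution vanishing in all degrees `≥ t`. -/
def HasProjDimLT (R : Type u) [CommRing R] (M : Type u) [AddCommGroup M] [Module R M]
    (t : ℕ) : Prop :=
  ∃ P : ProjectiveResolution (ModuleCat.of R M), ∀ i, t ≤ i → Limits.IsZero (P.complex.X i)

/-- `M` has injective dimension strictly less than `t`, i.e. `M` admits an injective
resolution vanishing in all degrees `≥ t`. -/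
def HasInjDimLT (R : Type u) [CommRing R] (M : Type u) [AddCommGroup M] [Module R M]
    (t : ℕ) : Prop :=
  ∃ I : InjectiveResolution (ModuleCat.of R M), ∀ i, t ≤ i → Limits.IsZero (I.cocomplex.X i)

/-- The depth of a module `M` over a local ring `(R, 𝔪, k)`: the smallest `i` such that
`Ext^i_R(k, M) ≠ 0` (and `⊤` if no such `i` exists). -/
noncomputable def moduleDepth (R : Type u) [CommRing R] [IsLocalRing R] (M : Type u)
    [AddCommGroup M] [Module R M] : ℕ∞ :=
  sInf {n : ℕ∞ | ∃ i : ℕ, n = (i : ℕ∞) ∧ ¬ ExtIsZero R (IsLocalRing.ResidueField R) M i}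

/-! For `f : 𝔪 → N`, the map `f ⊗ k` vanishes exactly when `f(𝔪) ⊆ 𝔪N`, as `N ⊗ R/𝔪 ≅ N/𝔪N`;
this gives (2) ⇔ (3). If `K ⊆ X` is Burch, pick `x ∈ (K :_X 𝔪)` and `r ∈ 𝔪` with `r x ∉ 𝔪K`:
then `a ↦ a x` is a map `𝔪 → K` whose image is not in `𝔪K`. Conversely, given `f : 𝔪 → N`
with `f(r) ∉ 𝔪N`, let `X` be the pushout of `f` and the inclusion `𝔪 ⊆ R`. Then `N` embeds in
`X`, the image `z` of `1 ∈ R` satisfies `a z = f(a)` for `a ∈ 𝔪`, so `z ∈ (N :_X 𝔪)` and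
`r z = f(r) ∉ 𝔪N`: `N` is Burch in `X`. -/

open TensorProduct

section TensorQuotient

variable {R M N : Type*} [CommRing R] [AddCommGroup M] [Module R M] [AddCommGroup N] [Module R N]

theorem TensorProduct.tmul_one_eq_zero_iff {I : Ideal R} (x : M) :
    x ⊗ₜ[R] (1 : R ⧸ I) = 0 ↔ x ∈ I • (⊤ : Submodule R M) := by
  rw [← tensorQuotEquivQuotSMul_symm_mk, LinearEquiv.map_eq_zero_iff,
    Submodule.Quotient.mk_eq_zero]

theorem TensorProduct.tmul_one_surjective (I : Ideal R) :
    Function.Surjective fun x : M => x ⊗ₜ[R] (1 : R ⧸ I) := by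
  intro t
  obtain ⟨x, hx⟩ := Submodule.mkQ_surjective (I • ⊤) (tensorQuotEquivQuotSMul M I t)
  exact ⟨x, (tensorQuotEquivQuotSMul M I).symm_apply_eq.mpr hx⟩

theorem LinearMap.rTensor_quotient_eq_zero_iff {I : Ideal R} (f : M →ₗ[R] N) :
    f.rTensor (R ⧸ I) = 0 ↔ LinearMap.range f ≤ I • ⊤ := by
  rw [LinearMap.range_le_iff_comap, Submodule.eq_top_iff']
  simp only [Submodule.mem_comap, ← tmul_one_eq_zero_iff, ← rTensor_tmul]
  constructor
  · intro h x
    rw [h, zero_apply]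
  · intro h
    refine LinearMap.ext fun t => ?_
    obtain ⟨x, rfl⟩ := tmul_one_surjective I t
    exact h x

end TensorQuotient

section SmulRange

variable {R N X : Type*} [CommRing R] [AddCommGroup N] [Module R N] [AddCommGroup X] [Module R X]
  {I : Ideal R}

theorem LinearMap.apply_mem_smul_range_iff {j : N →ₗ[R] X} (hj : Function.Injective j) (y : N) :
    j y ∈ I • LinearMap.range j ↔ y ∈ I • (⊤ : Submodule R N) := by
  rw [← Submodule.map_top, ← Submodule.map_smul'', ← Submodule.mem_comap,
    Submodule.comap_map_eq_of_injective hj]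

theorem LinearEquiv.range_comp_le_smul_top_iff {M : Type*} [AddCommGroup M] [Module R M]
    (e : N ≃ₗ[R] X) (f : M →ₗ[R] N) :
    LinearMap.range (e.toLinearMap ∘ₗ f) ≤ I • ⊤ ↔ LinearMap.range f ≤ I • ⊤ := by
  simp only [LinearMap.range_le_iff_comap, Submodule.eq_top_iff', Submodule.mem_comap,
    LinearMap.comp_apply]
  rw [← e.range]
  simp only [e.toLinearMap.apply_mem_smul_range_iff e.injective]

end SmulRange

namespace Submodule

variable {R X : Type u} [CommRing R] [AddCommGroup X] [Module R X]

theorem le_colonBy (K : Submodule R X) (I : Ideal R) : K ≤ K.colonBy I :=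
  fun _ hx r _ => K.smul_mem r hx

open IsLocalRing in
theorem isBurch_iff [IsLocalRing R] (K : Submodule R X) :
    K.IsBurch ↔ ∃ r ∈ maximalIdeal R, ∃ x ∈ K.colonBy (maximalIdeal R),
      r • x ∉ maximalIdeal R • K := by
  have hle : maximalIdeal R • K ≤ maximalIdeal R • K.colonBy (maximalIdeal R) :=
    smul_mono_right _ (K.le_colonBy _)
  rw [IsBurch, ne_eq, ← LE.le.ge_iff_eq' hle, smul_le]
  push Not
  rfl

open IsLocalRing in
theorem IsBurch.exists_range_not_le_smul_top [IsLocalRing R] {K : Submodule R X}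
    (hK : K.IsBurch) :
    ∃ f : maximalIdeal R →ₗ[R] K, ¬ LinearMap.range f ≤ maximalIdeal R • ⊤ := by
  obtain ⟨r, hr, x, hx, hrx⟩ := K.isBurch_iff.mp hK
  refine ⟨(LinearMap.toSpanSingleton R X x ∘ₗ (maximalIdeal R).subtype).codRestrict K
    fun a => hx a a.2, fun h => hrx ?_⟩
  exact (mem_smul_top_iff _ _ _).mp (h ⟨⟨r, hr⟩, rfl⟩)

end Submodule

namespace Ideal

variable {R N : Type u} [CommRing R] [AddCommGroup N] [Module R N] {I : Ideal R}

abbrev Pushout (f : I →ₗ[R] N) : Type u :=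
  (N × R) ⧸ LinearMap.range (f.prod (-I.subtype))

def pushoutInl (f : I →ₗ[R] N) : N →ₗ[R] Pushout f :=
  Submodule.mkQ _ ∘ₗ LinearMap.inl R N R

def pushoutInr (f : I →ₗ[R] N) : R →ₗ[R] Pushout f :=
  Submodule.mkQ _ ∘ₗ LinearMap.inr R N R

theorem pushoutInr_apply_coe (f : I →ₗ[R] N) (a : I) :
    pushoutInr f a = pushoutInl f (f a) := by
  refine (Submodule.Quotient.eq _).mpr ⟨-a, ?_⟩
  simp

theorem pushoutInl_injective (f : I →ₗ[R] N) : Function.Injective (pushoutInl f) := by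
  rw [← LinearMap.ker_eq_bot, Submodule.eq_bot_iff]
  intro y hy
  obtain ⟨a, ha⟩ := (Submodule.Quotient.mk_eq_zero _).mp hy
  have ha0 : a = 0 := by simpa using congrArg Prod.snd ha
  simpa [ha0] using (congrArg Prod.fst ha).symm

open IsLocalRing in
theorem isBurch_range_pushoutInl [IsLocalRing R] (f : maximalIdeal R →ₗ[R] N)
    (hf : ¬ LinearMap.range f ≤ maximalIdeal R • ⊤) :
    (LinearMap.range (pushoutInl f)).IsBurch := by
  obtain ⟨_, ⟨r, rfl⟩, hr⟩ := SetLike.not_le_iff_exists.mp hf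
  have hsmul (a : maximalIdeal R) : (a : R) • pushoutInr f 1 = pushoutInl f (f a) := by
    rw [← map_smul, smul_eq_mul, mul_one, pushoutInr_apply_coe]
  refine (Submodule.isBurch_iff _).mpr ⟨r, r.2, pushoutInr f 1, fun a ha => ?_, ?_⟩
  · exact ⟨f ⟨a, ha⟩, (hsmul ⟨a, ha⟩).symm⟩
  · rwa [hsmul, (pushoutInl f).apply_mem_smul_range_iff (pushoutInl_injective f)]

end Ideal

theorem isomorphic_to_burch_iff_general
    {R : Type u} [CommRing R] [IsLocalRing R]
    {N : Type u} [AddCommGroup N] [Module R N] [Module.Finite R N] :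
    ((∃ (X : Type u) (_ : AddCommGroup X) (_ : Module R X) (_ : Module.Finite R X)
        (K : Submodule R X), K.IsBurch ∧ Nonempty (N ≃ₗ[R] ↥K)) ↔
      (∃ f : ↥(IsLocalRing.maximalIdeal R) →ₗ[R] N,
        LinearMap.rTensor (IsLocalRing.ResidueField R) f ≠ 0)) ∧
    ((∃ f : ↥(IsLocalRing.maximalIdeal R) →ₗ[R] N,
        LinearMap.rTensor (IsLocalRing.ResidueField R) f ≠ 0) ↔
      ¬ (⨆ f : ↥(IsLocalRing.maximalIdeal R) →ₗ[R] N, LinearMap.range f) ≤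
          IsLocalRing.maximalIdeal R • (⊤ : Submodule R N)) := by
  have hk (f : IsLocalRing.maximalIdeal R →ₗ[R] N) :
      f.rTensor (IsLocalRing.ResidueField R) ≠ 0 ↔
        ¬ LinearMap.range f ≤ IsLocalRing.maximalIdeal R • ⊤ :=
    (LinearMap.rTensor_quotient_eq_zero_iff f).not
  simp only [hk]
  refine ⟨⟨?_, ?_⟩, by rw [iSup_le_iff, not_forall]⟩
  · rintro ⟨X, _, _, _, K, hK, ⟨e⟩⟩
    obtain ⟨f, hf⟩ := hK.exists_range_not_le_smul_top
    exact ⟨e.symm.toLinearMap ∘ₗ f, by rwa [e.symm.range_comp_le_smul_top_iff]⟩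
  · rintro ⟨f, hf⟩
    exact ⟨_, _, _, inferInstance, _, Ideal.isBurch_range_pushoutInl f hf,
      ⟨LinearEquiv.ofInjective _ (Ideal.pushoutInl_injective f)⟩⟩

/-- Over a Noetherian local ring `(R, 𝔪, k)` and a finitely generated module
`N`, the following are equivalent: (1) `N` is isomorphic to a Burch submodule of some finitely
generated module `X`; (2) there is a homomorphism `f : 𝔪 → N` with `f ⊗ k ≠ 0`; (3) the trace
`τ_𝔪(N) = ∑_{f : 𝔪 → N} Im f` is not contained in `𝔪N`. -/
theorem isomorphic_to_burch_iff
    {R : Type u} [CommRing R] [IsNoetherianRing R] [IsLocalRing R]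
    {N : Type u} [AddCommGroup N] [Module R N] [Module.Finite R N] :
    ((∃ (X : Type u) (_ : AddCommGroup X) (_ : Module R X) (_ : Module.Finite R X)
        (K : Submodule R X), K.IsBurch ∧ Nonempty (N ≃ₗ[R] ↥K)) ↔
      (∃ f : ↥(IsLocalRing.maximalIdeal R) →ₗ[R] N,
        LinearMap.rTensor (IsLocalRing.ResidueField R) f ≠ 0)) ∧
    ((∃ f : ↥(IsLocalRing.maximalIdeal R) →ₗ[R] N,
        LinearMap.rTensor (IsLocalRing.ResidueField R) f ≠ 0) ↔
      ¬ (⨆ f : ↥(IsLocalRing.maximalIdeal R) →ₗ[R] N, LinearMap.range f) ≤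
          IsLocalRing.maximalIdeal R • (⊤ : Submodule R N)) :=
  isomorphic_to_burch_iff_general
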